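/- (Bivariate Graeffe step for power projection) Let P(x,y), Q(x,y) ∈ A[x,y] with Q(0,0) = 1 and n ≥ 2. Let U(x,y) = P(x,y)Q(-x,y), and V(x,y) be defined by V(x²,y) = Q(x,y)Q(-x,y) considered in A[[x]][y-direction truncated mod y^m]. Then [x^{n-1}](P(x,y)/Q(x,y)) mod y^m equals [x^{⌈n/2⌉-1}](U_e(x,y)/V(x,y)) mod y^m if n-1 is even, and [x^{⌈n/2⌉-1}](U_o(x,y)/V(x,y)) mod y^m if n-1 is odd, where U(x,y) = U_e(x²,y) + x·U_o(x²,y). -/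

import Mathlib

/-- Even part: `Σ_i ([x^{2i}]U) x^i`. -/
noncomputable def evenPart {R : Type*} [CommRing R] (U : PowerSeries R) : PowerSeries R :=
  PowerSeries.mk fun n => PowerSeries.coeff (R := R) (2 * n) U

/-- Odd part: `Σ_i ([x^{2i+1}]U) x^i`. -/
noncomputable def oddPart {R : Type*} [CommRing R] (U : PowerSeries R) : PowerSeries R :=
  PowerSeries.mk fun n => PowerSeries.coeff (R := R) (2 * n + 1) U

/-- View a bivariate polynomial (outer variable `x`, inner variable `y`) as an element
of `(A⟦y⟧)⟦x⟧`. -/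
noncomputable def toSer {A : Type*} [CommRing A] (Q : Polynomial (Polynomial A)) :
    PowerSeries (PowerSeries A) :=
  PowerSeries.mk fun i => ((Q.coeff i : Polynomial A) : PowerSeries A)

/-! Split `G(x) = G_e(x²) + x G_o(x²)`. Then `G(x) G(-x) = V(x²)` with `V = G_e² - x G_o²`
(Graeffe), so `P/Q = P(x) Q(-x) / V(x²)`. Multiplying by a series in `x²` keeps even and odd
coefficients apart: `[x^{2k+r}] (U(x) K(x²)) = [x^k] (U_r K)` for `r ∈ {0, 1}`. -/
open PowerSeries

theorem map_ringInverse {M N F : Type*} [MonoidWithZero M] [MonoidWithZero N] [FunLike F M N]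
    [MonoidHomClass F M N] (f : F) {a : M} (ha : IsUnit a) :
    f (Ring.inverse a) = Ring.inverse (f a) := by
  obtain ⟨u, rfl⟩ := ha
  have h := Ring.inverse_unit (Units.map (f : M →* N) u)
  rw [← map_inv, Units.coe_map, Units.coe_map] at h
  rw [Ring.inverse_unit]
  exact h.symm

section EvenOddPart

variable {R : Type*} [CommRing R]

theorem coeff_two_mul_expand_two_add_X_mul (f g : PowerSeries R) (k : ℕ) :
    coeff (2 * k) (expand 2 two_ne_zero f + X * expand 2 two_ne_zero g) = coeff k f := by
  rw [map_add, coeff_expand_mul]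
  rcases k with _ | k
  · simp
  · rw [show 2 * (k + 1) = 2 * k + 1 + 1 by ring, coeff_succ_X_mul,
      coeff_expand_of_not_dvd _ _ _ (by omega), add_zero]

theorem coeff_two_mul_add_one_expand_two_add_X_mul (f g : PowerSeries R) (k : ℕ) :
    coeff (2 * k + 1) (expand 2 two_ne_zero f + X * expand 2 two_ne_zero g) = coeff k g := by
  rw [map_add, coeff_succ_X_mul, coeff_expand_mul, coeff_expand_of_not_dvd _ _ _ (by omega),
    zero_add]

theorem evenPart_expand_two_add_X_mul (f g : PowerSeries R) :
    evenPart (expand 2 two_ne_zero f + X * expand 2 two_ne_zero g) = f := by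
  ext k
  exact (coeff_mk _ _).trans (coeff_two_mul_expand_two_add_X_mul f g k)

theorem oddPart_expand_two_add_X_mul (f g : PowerSeries R) :
    oddPart (expand 2 two_ne_zero f + X * expand 2 two_ne_zero g) = g := by
  ext k
  exact (coeff_mk _ _).trans (coeff_two_mul_add_one_expand_two_add_X_mul f g k)

theorem expand_two_evenPart_add_X_mul_oddPart (U : PowerSeries R) :
    expand 2 two_ne_zero (evenPart U) + X * expand 2 two_ne_zero (oddPart U) = U := by
  ext n
  obtain ⟨k, rfl | rfl⟩ := Nat.even_or_odd' n
  · rw [coeff_two_mul_expand_two_add_X_mul, evenPart, coeff_mk]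
  · rw [coeff_two_mul_add_one_expand_two_add_X_mul, oddPart, coeff_mk]

theorem evenPart_expand_two (f : PowerSeries R) : evenPart (expand 2 two_ne_zero f) = f := by
  simpa using evenPart_expand_two_add_X_mul f 0

theorem evenPart_mul_expand_two (U K : PowerSeries R) :
    evenPart (U * expand 2 two_ne_zero K) = evenPart U * K := by
  conv_lhs => rw [← expand_two_evenPart_add_X_mul_oddPart U]
  rw [add_mul, mul_assoc, ← map_mul, ← map_mul, evenPart_expand_two_add_X_mul]

theorem oddPart_mul_expand_two (U K : PowerSeries R) :
    oddPart (U * expand 2 two_ne_zero K) = oddPart U * K := by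
  conv_lhs => rw [← expand_two_evenPart_add_X_mul_oddPart U]
  rw [add_mul, mul_assoc, ← map_mul, ← map_mul, oddPart_expand_two_add_X_mul]

theorem rescale_neg_one_expand_two (f : PowerSeries R) :
    rescale (-1) (expand 2 two_ne_zero f) = expand 2 two_ne_zero f := by
  ext n
  rw [coeff_rescale]
  obtain ⟨k, rfl | rfl⟩ := Nat.even_or_odd' n
  · rw [pow_mul, neg_one_sq, one_pow, one_mul]
  · rw [coeff_expand_of_not_dvd _ _ _ (by omega), mul_zero]

theorem mul_rescale_neg_one_self (G : PowerSeries R) :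
    G * rescale (-1) G = expand 2 two_ne_zero (evenPart G ^ 2 - X * oddPart G ^ 2) := by
  conv_lhs => rw [← expand_two_evenPart_add_X_mul_oddPart G]
  rw [map_add, map_mul, rescale_X, rescale_neg_one_expand_two, rescale_neg_one_expand_two,
    map_sub, map_mul, map_pow, map_pow, expand_X]
  simp only [map_neg, map_one]
  ring

theorem expand_two_evenPart_mul_rescale_neg_one_self (G : PowerSeries R) :
    expand 2 two_ne_zero (evenPart (G * rescale (-1) G)) = G * rescale (-1) G := by
  rw [mul_rescale_neg_one_self, evenPart_expand_two]

theorem coeff_mul_expand_two (U K : PowerSeries R) (n : ℕ) :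
    coeff n (U * expand 2 two_ne_zero K) =
      coeff (n / 2) ((if n % 2 = 0 then evenPart U else oddPart U) * K) := by
  obtain ⟨k, rfl | rfl⟩ := Nat.even_or_odd' n
  · rw [if_pos (by omega), ← evenPart_mul_expand_two, evenPart, coeff_mk,
      Nat.mul_div_cancel_left _ two_pos]
  · rw [if_neg (by omega), ← oddPart_mul_expand_two, oddPart, coeff_mk,
      show (2 * k + 1) / 2 = k by omega]

theorem isUnit_evenPart_mul_rescale_neg_one_self {G : PowerSeries R} (hG : IsUnit G) :
    IsUnit (evenPart (G * rescale (-1) G)) := by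
  have hW : IsUnit (G * rescale (-1) G) := hG.mul (hG.map _)
  rw [isUnit_iff_constantCoeff, ← constantCoeff_expand 2 two_ne_zero,
    expand_two_evenPart_mul_rescale_neg_one_self]
  exact hW.map _

theorem mul_inverse_eq_mul_rescale_mul_expand_two_inverse (F : PowerSeries R)
    {G : PowerSeries R} (hG : IsUnit G) :
    F * Ring.inverse G = F * rescale (-1) G *
      expand 2 two_ne_zero (Ring.inverse (evenPart (G * rescale (-1) G))) := by
  rw [map_ringInverse _ (isUnit_evenPart_mul_rescale_neg_one_self hG),
    expand_two_evenPart_mul_rescale_neg_one_self, Ring.mul_inverse_rev, mul_assoc,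
    Ring.mul_inverse_cancel_left _ _ (hG.map _)]

end EvenOddPart

theorem isUnit_toSer {A : Type*} [CommRing A] {Q : Polynomial (Polynomial A)}
    (hQ : IsUnit ((Q.coeff 0).coeff 0)) : IsUnit (toSer Q) := by
  rw [isUnit_iff_constantCoeff, toSer, ← coeff_zero_eq_constantCoeff_apply, coeff_mk,
    isUnit_iff_constantCoeff, Polynomial.constantCoeff_coe]
  exact hQ

theorem bivariate_graeffe_step_projection_general
    {A : Type*} [CommRing A] (n m : ℕ)
    (P Q : Polynomial (Polynomial A))
    (h0 : (Q.coeff 0).coeff 0 = 1) :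
    ∀ j < m,
      PowerSeries.coeff (R := A) j
          (PowerSeries.coeff (R := PowerSeries A) (n - 1)
            (toSer P * Ring.inverse (toSer Q))) =
        PowerSeries.coeff (R := A) j
          (PowerSeries.coeff (R := PowerSeries A) ((n + 1) / 2 - 1)
            ((if (n - 1) % 2 = 0 then
                evenPart (toSer P * PowerSeries.rescale (-1) (toSer Q))
              else
                oddPart (toSer P * PowerSeries.rescale (-1) (toSer Q))) *
              Ring.inverse (evenPart (toSer Q * PowerSeries.rescale (-1) (toSer Q))))) := by
  intro j _
  have hQ : IsUnit (toSer Q) := isUnit_toSer (h0 ▸ isUnit_one)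
  rw [mul_inverse_eq_mul_rescale_mul_expand_two_inverse _ hQ, coeff_mul_expand_two,
    show (n + 1) / 2 - 1 = (n - 1) / 2 by omega]

/-- Bivariate Graeffe step for power projection: with
`U(x,y) = P(x,y)Q(-x,y)`, `V(x²,y) = Q(x,y)Q(-x,y)`, and `Q(0,0) = 1`, the projection
`[x^{n-1}](P/Q) mod y^m` equals `[x^{⌈n/2⌉-1}](U_e/V) mod y^m` if `n-1` is even and
`[x^{⌈n/2⌉-1}](U_o/V) mod y^m` if `n-1` is odd, working in `(A⟦y⟧)⟦x⟧`. -/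
theorem bivariate_graeffe_step_projection
    {A : Type*} [CommRing A] (n m : ℕ) (hn : 2 ≤ n)
    (P Q : Polynomial (Polynomial A))
    (h0 : (Q.coeff 0).coeff 0 = 1) :
    ∀ j < m,
      PowerSeries.coeff (R := A) j
          (PowerSeries.coeff (R := PowerSeries A) (n - 1)
            (toSer P * Ring.inverse (toSer Q))) =
        PowerSeries.coeff (R := A) j
          (PowerSeries.coeff (R := PowerSeries A) ((n + 1) / 2 - 1)
            ((if (n - 1) % 2 = 0 then
                evenPart (toSer P * PowerSeries.rescale (-1) (toSer Q))
              else
                oddPart (toSer P * PowerSeries.rescale (-1) (toSer Q))) *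
              Ring.inverse (evenPart (toSer Q * PowerSeries.rescale (-1) (toSer Q))))) :=
  bivariate_graeffe_step_projection_general n m P Q h0
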